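/- Let A be an m×n real matrix, y ∈ ℝᵐ, and s ≤ n with (A^T y)_s ≠ 0. Then x̂ = (A^T y)_s / ‖(A^T y)_s‖₂ is a solution to argmax_x ⟨y, Ax⟩ subject to ‖x‖₀ ≤ s and ‖x‖₂ ≤ 1, where (A^T y)_s denotes the best s-term approximation of A^T y. -/

import Mathlib

/-! The objective is `⟨y, A x⟩ = ⟪Aᵀy, x⟫`, and for `x` supported on `T` this is `⟪(Aᵀy)|_T, x⟫`,
so by Cauchy–Schwarz it is at most `‖(Aᵀy)|_T‖₂` on the unit ball. Among sets of at most `s`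
indices, `‖(Aᵀy)|_T‖₂` is largest for a set of `s` largest-magnitude entries, and `x̂` attains
that bound. -/

/-- Restriction of `v` to the index set `S` (zero outside `S`). -/
noncomputable def restr {n : ℕ} (v : EuclideanSpace ℝ (Fin n)) (S : Finset (Fin n)) :
    EuclideanSpace ℝ (Fin n) := WithLp.toLp 2 (fun i => if i ∈ S then v i else 0)

open Finset
open scoped RealInnerProductSpace

section TopSum

variable {ι M : Type*} [AddCommMonoid M] [LinearOrder M] [IsOrderedAddMonoid M] {f : ι → M}

theorem sum_le_sum_of_card_le_of_forall_le {A B : Finset ι} (hB : ∀ j ∈ B, 0 ≤ f j)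
    (hcard : #A ≤ #B) (hle : ∀ i ∈ A, ∀ j ∈ B, f i ≤ f j) :
    ∑ i ∈ A, f i ≤ ∑ j ∈ B, f j := by
  rcases A.eq_empty_or_nonempty with rfl | hA
  · simpa using sum_nonneg hB
  have hBne : B.Nonempty := card_pos.mp (hA.card_pos.trans_le hcard)
  set c := B.inf' hBne f
  calc ∑ i ∈ A, f i ≤ #A • c := sum_le_card_nsmul _ _ _ fun i hi => le_inf' _ _ (hle i hi)
    _ ≤ #B • c := nsmul_le_nsmul_left (le_inf' _ _ hB) hcard
    _ ≤ ∑ j ∈ B, f j := card_nsmul_le_sum _ _ _ fun j hj => inf'_le _ hj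

theorem sum_le_sum_top_of_card_le [DecidableEq ι] {S T : Finset ι}
    (hf : ∀ i ∈ S, 0 ≤ f i) (hS : ∀ i ∈ S, ∀ j ∉ S, f j ≤ f i) (hcard : #T ≤ #S) :
    ∑ i ∈ T, f i ≤ ∑ i ∈ S, f i := by
  rw [← sum_inter_add_sum_sdiff T S, ← sum_inter_add_sum_sdiff S T, inter_comm T S]
  gcongr 1
  refine sum_le_sum_of_card_le_of_forall_le (fun j hj => hf j (mem_sdiff.mp hj).1) ?_
    fun i hi j hj => hS j (mem_sdiff.mp hj).1 i (mem_sdiff.mp hi).2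
  have hT := card_inter_add_card_sdiff T S
  have hS' := card_inter_add_card_sdiff S T
  rw [inter_comm] at hS'
  omega

end TopSum

section Restriction

variable {n : ℕ}

theorem restr_apply (v : EuclideanSpace ℝ (Fin n)) (S : Finset (Fin n)) (i : Fin n) :
    restr v S i = if i ∈ S then v i else 0 := rfl

theorem norm_restr_sq (v : EuclideanSpace ℝ (Fin n)) (S : Finset (Fin n)) :
    ‖restr v S‖ ^ 2 = ∑ i ∈ S, v i ^ 2 := by
  simp [EuclideanSpace.norm_sq_eq, restr_apply, apply_ite (· ^ 2), sum_ite_mem]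

theorem inner_restr_self (v : EuclideanSpace ℝ (Fin n)) (S : Finset (Fin n)) :
    ⟪v, restr v S⟫ = ‖restr v S‖ ^ 2 := by
  rw [norm_restr_sq]
  simp [PiLp.inner_apply, restr_apply, sum_ite_mem, sq]

theorem inner_inv_norm_smul_restr (v : EuclideanSpace ℝ (Fin n)) (S : Finset (Fin n)) :
    ⟪v, ‖restr v S‖⁻¹ • restr v S⟫ = ‖restr v S‖ := by
  rw [inner_smul_right, inner_restr_self, inv_mul_eq_div, sq, mul_self_div_self]

theorem inner_restr_support (v x : EuclideanSpace ℝ (Fin n)) :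
    ⟪v, x⟫ = ⟪restr v (univ.filter fun j => x j ≠ 0), x⟫ := by
  refine sum_congr rfl fun j _ => ?_
  by_cases hj : x j = 0 <;> simp [restr_apply, hj]

theorem card_support_smul_restr_le (c : ℝ) (v : EuclideanSpace ℝ (Fin n)) (S : Finset (Fin n)) :
    #(univ.filter fun j => (c • restr v S) j ≠ 0) ≤ #S :=
  card_le_card fun j hj => by
    by_contra hjS
    simp [restr_apply, hjS] at hj

theorem norm_restr_le_of_card_le {v : EuclideanSpace ℝ (Fin n)} {S T : Finset (Fin n)}
    (hS : ∀ i ∈ S, ∀ j ∉ S, |v j| ≤ |v i|) (hcard : #T ≤ #S) :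
    ‖restr v T‖ ≤ ‖restr v S‖ := by
  rw [← sq_le_sq₀ (norm_nonneg _) (norm_nonneg _), norm_restr_sq, norm_restr_sq]
  simp_rw [← sq_abs (v _)]
  exact sum_le_sum_top_of_card_le (fun i _ => sq_nonneg _)
    (fun i hi j hj => pow_le_pow_left₀ (abs_nonneg _) (hS i hi j hj) 2) hcard

theorem inner_le_norm_restr {v x : EuclideanSpace ℝ (Fin n)} {S : Finset (Fin n)}
    (hS : ∀ i ∈ S, ∀ j ∉ S, |v j| ≤ |v i|) (hx : ‖x‖ ≤ 1)
    (hxS : #(univ.filter fun j => x j ≠ 0) ≤ #S) :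
    ⟪v, x⟫ ≤ ‖restr v S‖ :=
  calc ⟪v, x⟫ = ⟪restr v (univ.filter fun j => x j ≠ 0), x⟫ := inner_restr_support v x
    _ ≤ ‖restr v (univ.filter fun j => x j ≠ 0)‖ * ‖x‖ := real_inner_le_norm _ _
    _ ≤ ‖restr v (univ.filter fun j => x j ≠ 0)‖ := mul_le_of_le_one_right (norm_nonneg _) hx
    _ ≤ ‖restr v S‖ := norm_restr_le_of_card_le hS hxS

end Restriction

theorem sum_mul_mulVec_eq_sum_transpose_mulVec_mul {R m n : Type*} [CommSemiring R] [Fintype m]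
    [Fintype n] (A : Matrix m n R) (y : m → R) (w : n → R) :
    ∑ i, y i * A.mulVec w i = ∑ j, A.transpose.mulVec y j * w j := by
  simpa only [dotProduct, Matrix.mulVec_transpose] using Matrix.dotProduct_mulVec y A w

theorem norm_inv_norm_smul_le_one {E : Type*} [NormedAddCommGroup E] [NormedSpace ℝ E] (w : E) :
    ‖‖w‖⁻¹ • w‖ ≤ 1 := by
  rw [norm_smul, norm_inv, norm_norm]
  exact inv_mul_le_one_of_le₀ le_rfl (norm_nonneg w)

theorem stmt_5_general {m n : ℕ} (A : Matrix (Fin m) (Fin n) ℝ) (y : Fin m → ℝ)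
    (s : ℕ)
    (z : EuclideanSpace ℝ (Fin n)) (hz : z = fun j => A.transpose.mulVec y j)
    (S : Finset (Fin n)) (hScard : S.card = s)
    (hSmax : ∀ i ∈ S, ∀ j ∉ S, |z j| ≤ |z i|)
    (zs xh : EuclideanSpace ℝ (Fin n)) (hzs : zs = restr z S)
    (hxh : xh = ‖zs‖⁻¹ • zs) :
    ‖xh‖ ≤ 1 ∧ (Finset.univ.filter fun j => xh j ≠ 0).card ≤ s ∧
    ∀ x : EuclideanSpace ℝ (Fin n),
      ‖x‖ ≤ 1 → (Finset.univ.filter fun j => x j ≠ 0).card ≤ s →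
        (∑ i, y i * A.mulVec (fun j => x j) i) ≤ ∑ i, y i * A.mulVec (fun j => xh j) i := by
  subst hxh hzs hScard
  have objective (x : EuclideanSpace ℝ (Fin n)) :
      ∑ i, y i * A.mulVec (fun j => x j) i = ⟪z, x⟫ := by
    rw [sum_mul_mulVec_eq_sum_transpose_mulVec_mul, PiLp.inner_apply, hz]
    simp [mul_comm]
  refine ⟨norm_inv_norm_smul_le_one _, card_support_smul_restr_le _ _ _, fun x hx hxS => ?_⟩
  rw [objective, objective, inner_inv_norm_smul_restr]
  exact inner_le_norm_restr hSmax hx hxS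

/-- With `(Aᵀy)_s ≠ 0` the best `s`-term approximation of `Aᵀy` (restriction to a set
`S` of its `s` largest-magnitude entries), `x̂ = (Aᵀy)_s / ‖(Aᵀy)_s‖₂` solves
`argmax ⟨y, Ax⟩` s.t. `‖x‖₀ ≤ s`, `‖x‖₂ ≤ 1`. -/
theorem stmt_5 {m n : ℕ} (A : Matrix (Fin m) (Fin n) ℝ) (y : Fin m → ℝ)
    (s : ℕ) (hs : s ≤ n)
    (z : EuclideanSpace ℝ (Fin n)) (hz : z = fun j => A.transpose.mulVec y j)
    (S : Finset (Fin n)) (hScard : S.card = s)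
    (hSmax : ∀ i ∈ S, ∀ j ∉ S, |z j| ≤ |z i|)
    (zs xh : EuclideanSpace ℝ (Fin n)) (hzs : zs = restr z S) (hzsne : zs ≠ 0)
    (hxh : xh = ‖zs‖⁻¹ • zs) :
    ‖xh‖ ≤ 1 ∧ (Finset.univ.filter fun j => xh j ≠ 0).card ≤ s ∧
    ∀ x : EuclideanSpace ℝ (Fin n),
      ‖x‖ ≤ 1 → (Finset.univ.filter fun j => x j ≠ 0).card ≤ s →
        (∑ i, y i * A.mulVec (fun j => x j) i) ≤ ∑ i, y i * A.mulVec (fun j => xh j) i :=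
  stmt_5_general A y s z hz S hScard hSmax zs xh hzs hxh
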